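/- For all real numbers a, b > 0, p > 1, and τ₁, τ₂ ≥ 0, one has (b - a)(τ₁^{p+1} a^{-p} - τ₂^{p+1} b^{-p}) ≥ (τ₁τ₂/(p-1)) ((b/τ₂)^{(-p+1)/2} - (a/τ₁)^{(-p+1)/2})² - max{4, (6p-5)/2} (τ₂ - τ₁)² ((b/τ₂)^{-p+1} + (a/τ₁)^{-p+1}). -/

import Mathlib

open Real Set

/-!
Put `x = a / τ₁`, `y = b / τ₂`, `q = (1 - p) / 2`. The left side becomes
`(τ₂ y - τ₁ x)(τ₁ x⁻ᵖ - τ₂ y⁻ᵖ) = τ₁τ₂ (y - x)(x⁻ᵖ - y⁻ᵖ) + (τ₂ - τ₁)(τ₁ x²ᑫ - τ₂ y²ᑫ)`.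
The first term is controlled by the elementary inequality
`4p (xᑫ - yᑫ)² ≤ (p - 1)² (y - x)(x⁻ᵖ - y⁻ᵖ)`, which after scaling to `x = 1 ≤ t = y`
follows from three successive monotonicity arguments starting at `t = 1`. What is left is a
quadratic form in `(xᑫ, yᑫ)`, and the constant `max 4 ((6p - 5) / 2)` makes its discriminant
nonpositive.
-/

theorem le_of_hasDerivAt_nonneg_Ici {f f' : ℝ → ℝ} {a t : ℝ}
    (hf : ∀ s ∈ Ici a, HasDerivAt f (f' s) s) (hf' : ∀ s ∈ Ioi a, 0 ≤ f' s) (ht : a ≤ t) :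
    f a ≤ f t := by
  refine monotoneOn_of_hasDerivWithinAt_nonneg (convex_Ici a)
    (fun s hs => (hf s hs).continuousAt.continuousWithinAt)
    (fun s hs => (hf s (interior_subset hs)).hasDerivWithinAt) (fun s hs => hf' s ?_)
    self_mem_Ici ht ht
  simpa using hs

theorem two_mul_rpow_half_le {p t : ℝ} (hp : 0 ≤ p) (ht : 1 ≤ t) :
    2 * p * (p - 1) * ((p + 1) * t ^ ((p - 1) / 2) - 2) ≤
      (p - 1) ^ 2 * ((p + 1) * t ^ p + (p - 1)) := by
  have hmono := le_of_hasDerivAt_nonneg_Ici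
    (f := fun t => (p - 1) ^ 2 * ((p + 1) * t ^ p + (p - 1)) -
      2 * p * (p - 1) * ((p + 1) * t ^ ((p - 1) / 2) - 2))
    (f' := fun t => p * (p + 1) * (p - 1) ^ 2 * (t ^ (p - 1) - t ^ ((p - 1) / 2 - 1)))
    (fun s hs => ?_) (fun s hs => ?_) ht
  · simp only [one_rpow] at hmono
    linarith
  · have hs0 : s ≠ 0 := (zero_lt_one.trans_le hs).ne'
    refine ((((hasDerivAt_rpow_const (p := p) (.inl hs0)).const_mul (p + 1)).add_const
      (p - 1)).const_mul ((p - 1) ^ 2) |>.sub ((((hasDerivAt_rpow_const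
      (p := (p - 1) / 2) (.inl hs0)).const_mul (p + 1)).sub_const 2).const_mul
      (2 * p * (p - 1)))).congr_deriv ?_
    ring
  · have : s ^ ((p - 1) / 2 - 1) ≤ s ^ (p - 1) :=
      rpow_le_rpow_of_exponent_le (le_of_lt hs) (by linarith)
    exact mul_nonneg (by positivity) (sub_nonneg.2 this)

theorem four_mul_rpow_half_sub_le {p t : ℝ} (hp : 0 ≤ p) (ht : 1 ≤ t) :
    4 * p * (p - 1) * (t ^ ((p + 1) / 2) - t) ≤
      (p - 1) ^ 2 * (t ^ (p + 1) + (p - 1) * t - p) := by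
  have hmono := le_of_hasDerivAt_nonneg_Ici
    (f := fun t => (p - 1) ^ 2 * (t ^ (p + 1) + (p - 1) * t - p) -
      4 * p * (p - 1) * (t ^ ((p + 1) / 2) - t))
    (f' := fun t => (p - 1) ^ 2 * ((p + 1) * t ^ p + (p - 1)) -
      2 * p * (p - 1) * ((p + 1) * t ^ ((p - 1) / 2) - 2))
    (fun s hs => ?_) (fun s hs => ?_) ht
  · simp only [one_rpow] at hmono
    linarith
  · have hs0 : s ≠ 0 := (zero_lt_one.trans_le hs).ne'
    refine (((hasDerivAt_rpow_const (p := p + 1) (.inl hs0)).add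
      ((hasDerivAt_id s).const_mul (p - 1))).sub_const p |>.const_mul ((p - 1) ^ 2) |>.sub
      (((hasDerivAt_rpow_const (p := (p + 1) / 2) (.inl hs0)).sub (hasDerivAt_id s)).const_mul
      (4 * p * (p - 1)))).congr_deriv ?_
    rw [show p + 1 - 1 = p by ring, show (p + 1) / 2 - 1 = (p - 1) / 2 by ring]
    ring
  · have := two_mul_rpow_half_le hp (le_of_lt hs)
    linarith

theorem four_mul_sq_one_sub_rpow_le {p t : ℝ} (hp : 0 ≤ p) (ht : 1 ≤ t) :
    4 * p * (1 - t ^ ((-p + 1) / 2)) ^ 2 ≤ (p - 1) ^ 2 * ((t - 1) * (1 - t ^ (-p))) := by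
  have hmono := le_of_hasDerivAt_nonneg_Ici
    (f := fun t => (p - 1) ^ 2 * ((t - 1) * (1 - t ^ (-p))) - 4 * p * (1 - t ^ ((-p + 1) / 2)) ^ 2)
    (f' := fun t => t ^ (-p - 1) *
      ((p - 1) ^ 2 * (t ^ (p + 1) + (p - 1) * t - p) - 4 * p * (p - 1) * (t ^ ((p + 1) / 2) - t)))
    (fun s hs => ?_) (fun s hs => ?_) ht
  · simp only [one_rpow] at hmono
    linarith
  · have hs0 : 0 < s := zero_lt_one.trans_le hs
    have e₁ : s ^ (-p - 1) * s ^ (p + 1) = 1 := by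
      rw [← rpow_add hs0, show -p - 1 + (p + 1) = 0 by ring, rpow_zero]
    have e₂ : s ^ (-p - 1) * s = s ^ (-p) := by
      rw [← rpow_add_one hs0.ne']; ring_nf
    have e₃ : s ^ (-p - 1) * s ^ ((p + 1) / 2) = s ^ ((-p + 1) / 2 - 1) := by
      rw [← rpow_add hs0]; ring_nf
    have e₄ : s ^ ((-p + 1) / 2) * s ^ ((-p + 1) / 2 - 1) = s ^ (-p) := by
      rw [← rpow_add hs0]; ring_nf
    refine (((((hasDerivAt_id s).sub_const 1).mul ((hasDerivAt_const s 1).sub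
      (hasDerivAt_rpow_const (p := -p) (.inl hs0.ne')))).const_mul ((p - 1) ^ 2)).sub
      ((((hasDerivAt_const s 1).sub (hasDerivAt_rpow_const (p := (-p + 1) / 2)
        (.inl hs0.ne'))).pow 2).const_mul (4 * p))).congr_deriv ?_
    simp only [Pi.sub_apply, id_eq, Nat.cast_ofNat]
    linear_combination (-(p - 1) ^ 2) * e₁ - ((p - 1) ^ 3 + 4 * p * (p - 1) - p * (p - 1) ^ 2) * e₂
        + 4 * p * (p - 1) * e₃ + 4 * p * (p - 1) * e₄
  · have hs0 : 0 < s := zero_lt_one.trans_le (le_of_lt hs)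
    exact mul_nonneg (rpow_nonneg hs0.le _) (sub_nonneg.2 (four_mul_rpow_half_sub_le hp hs.le))

theorem four_mul_sq_rpow_sub_rpow_le {p x y : ℝ} (hp : 0 ≤ p) (hx : 0 < x) (hy : 0 < y) :
    4 * p * (x ^ ((-p + 1) / 2) - y ^ ((-p + 1) / 2)) ^ 2 ≤
      (p - 1) ^ 2 * ((y - x) * (x ^ (-p) - y ^ (-p))) := by
  wlog hxy : x ≤ y generalizing x y
  · convert this hy hx (le_of_not_ge hxy) using 1 <;> ring
  obtain ⟨t, ht, rfl⟩ : ∃ t, 1 ≤ t ∧ y = x * t :=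
    ⟨y / x, (one_le_div hx).2 hxy, by field_simp⟩
  have ht0 : 0 ≤ t := zero_le_one.trans ht
  have hsq : (x ^ ((-p + 1) / 2)) ^ 2 = x * x ^ (-p) := by
    rw [sq, ← rpow_add hx, mul_comm, ← rpow_add_one hx.ne']
    ring_nf
  rw [mul_rpow hx.le ht0, mul_rpow hx.le ht0]
  calc 4 * p * (x ^ ((-p + 1) / 2) - x ^ ((-p + 1) / 2) * t ^ ((-p + 1) / 2)) ^ 2
      = x * x ^ (-p) * (4 * p * (1 - t ^ ((-p + 1) / 2)) ^ 2) := by rw [← hsq]; ring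
    _ ≤ x * x ^ (-p) * ((p - 1) ^ 2 * ((t - 1) * (1 - t ^ (-p)))) :=
        mul_le_mul_of_nonneg_left (four_mul_sq_one_sub_rpow_le hp ht) (by positivity)
    _ = (p - 1) ^ 2 * ((x * t - x) * (x ^ (-p) - x ^ (-p) * t ^ (-p))) := by ring

theorem quadratic_form_nonneg {α β γ : ℝ} (hsum : 0 ≤ α + γ) (hdisc : β ^ 2 ≤ α * γ) (X Y : ℝ) :
    0 ≤ α * X ^ 2 - 2 * β * X * Y + γ * Y ^ 2 := by
  have hα : 0 ≤ α := by nlinarith [sq_nonneg β]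
  rcases hα.eq_or_lt with rfl | hα
  · have hβ : β = 0 := by nlinarith [sq_nonneg β]
    subst hβ
    nlinarith [sq_nonneg Y]
  · refine nonneg_of_mul_nonneg_right ?_ hα
    nlinarith [sq_nonneg (α * X - β * Y), sq_nonneg Y]

theorem quadratic_remainder_nonneg {p c τ₁ τ₂ : ℝ} (hp : 1 ≤ p) (hτ₁ : 0 ≤ τ₁) (hτ₂ : 0 ≤ τ₂)
    (hc₁ : 1 ≤ c) (hc : (6 * p - 5) / 2 ≤ c) (X Y : ℝ) :
    0 ≤ (3 * p + 1) * (τ₁ * τ₂) * (X - Y) ^ 2 +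
      (p - 1) ^ 2 * ((τ₂ - τ₁) * (τ₁ * X ^ 2 - τ₂ * Y ^ 2) + c * (τ₂ - τ₁) ^ 2 * (X ^ 2 + Y ^ 2)) := by
  set B := (3 * p + 1) * (τ₁ * τ₂)
  have hB : 0 ≤ B := by positivity
  have hcoef : (p - 1) ^ 2 * (τ₁ * τ₂) ≤ (2 * c - 1) * B := by
    have : (p - 1) ^ 2 ≤ (2 * c - 1) * (3 * p + 1) := by nlinarith
    simpa only [B, mul_assoc] using mul_le_mul_of_nonneg_right this (mul_nonneg hτ₁ hτ₂)
  have := quadratic_form_nonneg (β := B) (X := X) (Y := Y)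
    (α := B + (p - 1) ^ 2 * ((τ₂ - τ₁) * τ₁ + c * (τ₂ - τ₁) ^ 2))
    (γ := B + (p - 1) ^ 2 * (c * (τ₂ - τ₁) ^ 2 - (τ₂ - τ₁) * τ₂)) ?_ ?_
  · convert this using 1; ring
  · nlinarith [mul_nonneg (sq_nonneg (p - 1)) (sq_nonneg (τ₂ - τ₁))]
  · have hcc : 0 ≤ c * (c - 1) := by nlinarith
    -- `α * γ - B ^ 2` is exactly this product
    have : 0 ≤ (p - 1) ^ 2 * (τ₂ - τ₁) ^ 2 * ((2 * c - 1) * B - (p - 1) ^ 2 * (τ₁ * τ₂) +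
        (p - 1) ^ 2 * (c * (c - 1)) * (τ₂ - τ₁) ^ 2) :=
      mul_nonneg (by positivity) (by nlinarith [mul_nonneg (sq_nonneg (p - 1)) hcc])
    linear_combination this

theorem kassmann_ineq_normalized {p c τ₁ τ₂ x y : ℝ} (hp : 1 < p) (hτ₁ : 0 ≤ τ₁) (hτ₂ : 0 ≤ τ₂)
    (hx : 0 < x) (hy : 0 < y) (hc₁ : 1 ≤ c) (hc : (6 * p - 5) / 2 ≤ c) :
    τ₁ * τ₂ / (p - 1) * (y ^ ((-p + 1) / 2) - x ^ ((-p + 1) / 2)) ^ 2 -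
        c * (τ₂ - τ₁) ^ 2 * (y ^ (-p + 1) + x ^ (-p + 1)) ≤
      (τ₂ * y - τ₁ * x) * (τ₁ * x ^ (-p) - τ₂ * y ^ (-p)) := by
  have hsq {z : ℝ} (hz : 0 < z) : z ^ (-p + 1) = (z ^ ((-p + 1) / 2)) ^ 2 := by
    rw [sq, ← rpow_add hz]; ring_nf
  have hmul {z : ℝ} (hz : 0 < z) : z * z ^ (-p) = (z ^ ((-p + 1) / 2)) ^ 2 := by
    rw [← hsq hz, rpow_add_one hz.ne', mul_comm]
  have hsplit : (τ₂ * y - τ₁ * x) * (τ₁ * x ^ (-p) - τ₂ * y ^ (-p)) =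
      τ₁ * τ₂ * ((y - x) * (x ^ (-p) - y ^ (-p))) + (τ₂ - τ₁) *
        (τ₁ * (x ^ ((-p + 1) / 2)) ^ 2 - τ₂ * (y ^ ((-p + 1) / 2)) ^ 2) := by
    rw [← hmul hx, ← hmul hy]; ring
  have hkey := mul_le_mul_of_nonneg_left
    (four_mul_sq_rpow_sub_rpow_le (zero_lt_one.trans hp).le hx hy) (mul_nonneg hτ₁ hτ₂)
  have hrem := quadratic_remainder_nonneg hp.le hτ₁ hτ₂ hc₁ hc
    (x ^ ((-p + 1) / 2)) (y ^ ((-p + 1) / 2))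
  have hp₁ : 0 < p - 1 := sub_pos.2 hp
  rw [hsq hx, hsq hy, hsplit, div_mul_eq_mul_div, sub_le_iff_le_add, div_le_iff₀ hp₁]
  refine le_of_mul_le_mul_left ?_ hp₁
  linear_combination hkey + hrem

theorem rpow_add_one_mul_rpow_neg {τ a : ℝ} (hτ : 0 < τ) (ha : 0 < a) (p : ℝ) :
    τ ^ (p + 1) * a ^ (-p) = τ * (a / τ) ^ (-p) := by
  rw [div_rpow ha.le hτ.le, rpow_neg hτ.le, rpow_add_one hτ.ne']
  field_simp

theorem stmt_0 (a b p τ₁ τ₂ : ℝ) (ha : 0 < a) (hb : 0 < b) (hp : 1 < p)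
    (hτ₁ : 0 < τ₁) (hτ₂ : 0 < τ₂) :
    (b - a) * (τ₁ ^ (p + 1) * a ^ (-p) - τ₂ ^ (p + 1) * b ^ (-p)) ≥
      τ₁ * τ₂ / (p - 1) *
          ((b / τ₂) ^ ((-p + 1) / 2) - (a / τ₁) ^ ((-p + 1) / 2)) ^ 2 -
        max 4 ((6 * p - 5) / 2) * (τ₂ - τ₁) ^ 2 *
          ((b / τ₂) ^ (-p + 1) + (a / τ₁) ^ (-p + 1)) := by
  have hba : b - a = τ₂ * (b / τ₂) - τ₁ * (a / τ₁) := by field_simp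
  rw [ge_iff_le, hba, rpow_add_one_mul_rpow_neg hτ₁ ha, rpow_add_one_mul_rpow_neg hτ₂ hb]
  exact kassmann_ineq_normalized hp hτ₁.le hτ₂.le (div_pos ha hτ₁) (div_pos hb hτ₂)
    (by norm_num) (le_max_right _ _)
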